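/- arXiv:2605.17524 — 2 statements merged into one kernel-verified Lean document; each statement's English description precedes it below -/
import Mathlib

section
/- Let Z ~ N(μ, Σ) be a D-dimensional Gaussian vector with σ_i² = Σ_{ii} > 0 for all i, let S = Σ_{i=1}^D sign(Z_i) and T = Σ_{j=1}^D d_j Z_j for fixed real coefficients d_j. Then Cov(S, T) = Σ_{i,j} a_i Σ_{ij} d_j, where a_i = 2φ(μ_i/σ_i)/σ_i. -/
/-!
Write `Zⱼ - μⱼ = (Σᵢⱼ / Σᵢᵢ) (Zᵢ - μᵢ) + W`. The residual `W` is uncorrelated with `Zᵢ`, hence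
independent of it because `(Zᵢ, Zⱼ)` is jointly Gaussian, so
`Cov(sign Zᵢ, Zⱼ) = (Σᵢⱼ / Σᵢᵢ) E[sign(Zᵢ) (Zᵢ - μᵢ)]`. Since `-σ² φ_σ` is a primitive of
`t ↦ (t - m) φ_σ(t)` for the `N(m, σ²)` density `φ_σ`, splitting the last expectation at the
zero of `sign` gives `2 σᵢ² φ_σᵢ(0) = 2 σᵢ φ(μᵢ / σᵢ)`. Bilinearity of the covariance then
sums these terms into `Cov(S, T)`.
-/

open MeasureTheory ProbabilityTheory Real

/-- Standard normal density `φ(t) = (2π)^{-1/2} e^{-t²/2}`. -/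
noncomputable def stdNormalPDF (t : ℝ) : ℝ :=
  (Real.sqrt (2 * Real.pi))⁻¹ * Real.exp (-t ^ 2 / 2)

open scoped NNReal ENNReal
open Set Filter Topology

lemma Real.abs_sign_le_one (r : ℝ) : |Real.sign r| ≤ 1 := by
  rcases Real.sign_apply_eq r with h | h | h <;> simp [h]

lemma Real.measurable_sign : Measurable Real.sign :=
  Measurable.ite measurableSet_Iio measurable_const
    (Measurable.ite measurableSet_Ioi measurable_const measurable_const)

lemma MeasureTheory.memLp_sign_comp {α : Type*} [MeasurableSpace α] {μ : Measure α}
    [IsFiniteMeasure μ] {g : α → ℝ} (hg : AEMeasurable g μ) (p : ℝ≥0∞) :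
    MemLp (fun x ↦ sign (g x)) p μ :=
  MemLp.of_bound (Real.measurable_sign.comp_aemeasurable hg).aestronglyMeasurable 1
    (ae_of_all _ fun _ ↦ Real.abs_sign_le_one _)

lemma stdNormalPDF_neg (t : ℝ) : stdNormalPDF (-t) = stdNormalPDF t := by
  simp [stdNormalPDF]

namespace ProbabilityTheory

lemma gaussianPDFReal_zero_eq_stdNormalPDF (v : ℝ≥0) (x : ℝ) :
    gaussianPDFReal 0 v x = stdNormalPDF (x / √v) / √v := by
  rcases eq_or_ne v 0 with rfl | hv
  · simp
  have hv' : (0 : ℝ) < v := by positivity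
  rw [gaussianPDFReal, stdNormalPDF, div_pow, sq_sqrt hv'.le, sqrt_mul (by positivity) (v : ℝ)]
  field_simp
  ring_nf

lemma hasDerivAt_gaussianPDFReal (m : ℝ) (v : ℝ≥0) (x : ℝ) :
    HasDerivAt (gaussianPDFReal m v) (-((x - m) / v) * gaussianPDFReal m v x) x := by
  have h : HasDerivAt (fun y ↦ -(y - m) ^ 2 / (2 * v)) (-((x - m) / v)) x :=
    ((((hasDerivAt_id' x).sub_const m).fun_pow 2).neg.div_const (2 * (v : ℝ))).congr_deriv
      (by ring)
  refine (h.exp.const_mul (√(2 * π * v))⁻¹).congr_deriv ?_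
  rw [gaussianPDFReal]
  ring

section FirstMoment

variable (m : ℝ) {v : ℝ≥0}

lemma integrable_sub_mul_gaussianPDFReal (hv : v ≠ 0) :
    Integrable (fun x ↦ (x - m) * gaussianPDFReal m v x) := by
  have hb : (0 : ℝ) < 1 / (2 * v) := by positivity
  refine (((integrable_mul_exp_neg_mul_sq hb).comp_sub_right m).const_mul
    (√(2 * π * v))⁻¹).congr (ae_of_all _ fun x ↦ ?_)
  simp only [gaussianPDFReal]
  ring_nf

lemma hasDerivAt_neg_mul_gaussianPDFReal (hv : v ≠ 0) (x : ℝ) :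
    HasDerivAt (fun y ↦ -(v * gaussianPDFReal m v y)) ((x - m) * gaussianPDFReal m v x) x := by
  have hv' : (v : ℝ) ≠ 0 := by exact_mod_cast hv
  refine ((hasDerivAt_gaussianPDFReal m v x).const_mul (v : ℝ)).neg.congr_deriv ?_
  field_simp

lemma integrable_deriv_gaussianPDFReal (hv : v ≠ 0) :
    Integrable (fun x ↦ -((x - m) / v) * gaussianPDFReal m v x) :=
  ((integrable_sub_mul_gaussianPDFReal m hv).const_mul (-(v : ℝ)⁻¹)).congr
    (ae_of_all _ fun x ↦ by simp only; ring)

lemma integral_Ioi_sub_mul_gaussianPDFReal (hv : v ≠ 0) (c : ℝ) :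
    ∫ x in Ioi c, (x - m) * gaussianPDFReal m v x = v * gaussianPDFReal m v c := by
  have hlim : Tendsto (gaussianPDFReal m v) atTop (𝓝 0) :=
    tendsto_zero_of_hasDerivAt_of_integrableOn_Ioi (a := c)
      (fun x _ ↦ hasDerivAt_gaussianPDFReal m v x)
      (integrable_deriv_gaussianPDFReal m hv).integrableOn
      (integrable_gaussianPDFReal m v).integrableOn
  simpa using integral_Ioi_of_hasDerivAt_of_tendsto' (a := c) (m := 0)
    (fun x _ ↦ hasDerivAt_neg_mul_gaussianPDFReal m hv x)
    (integrable_sub_mul_gaussianPDFReal m hv).integrableOn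
    (by simpa using (hlim.const_mul (v : ℝ)).neg)

lemma integral_Iic_sub_mul_gaussianPDFReal (hv : v ≠ 0) (c : ℝ) :
    ∫ x in Iic c, (x - m) * gaussianPDFReal m v x = -(v * gaussianPDFReal m v c) := by
  have hlim : Tendsto (gaussianPDFReal m v) atBot (𝓝 0) :=
    tendsto_zero_of_hasDerivAt_of_integrableOn_Iic (a := c)
      (fun x _ ↦ hasDerivAt_gaussianPDFReal m v x)
      (integrable_deriv_gaussianPDFReal m hv).integrableOn
      (integrable_gaussianPDFReal m v).integrableOn
  simpa using integral_Iic_of_hasDerivAt_of_tendsto' (a := c) (m := 0)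
    (fun x _ ↦ hasDerivAt_neg_mul_gaussianPDFReal m hv x)
    (integrable_sub_mul_gaussianPDFReal m hv).integrableOn
    (by simpa using (hlim.const_mul (v : ℝ)).neg)

end FirstMoment

lemma integral_sign_add_mul_sub_gaussianReal (b m : ℝ) (v : ℝ≥0) :
    ∫ x, sign (b + x) * (x - m) ∂gaussianReal m v = 2 * v * gaussianPDFReal m v (-b) := by
  rcases eq_or_ne v 0 with rfl | hv
  · simp [gaussianReal_zero_var]
  rw [integral_gaussianReal_eq_integral_smul hv]
  have hint : Integrable (fun x ↦ sign (b + x) * ((x - m) * gaussianPDFReal m v x)) :=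
    (integrable_sub_mul_gaussianPDFReal m hv).bdd_mul (c := 1)
      (Real.measurable_sign.comp (measurable_const.add measurable_id)).aestronglyMeasurable
      (ae_of_all _ fun x ↦ Real.abs_sign_le_one _)
  have hright : ∫ x in Ioi (-b), sign (b + x) * ((x - m) * gaussianPDFReal m v x)
      = ∫ x in Ioi (-b), (x - m) * gaussianPDFReal m v x :=
    setIntegral_congr_fun measurableSet_Ioi fun x hx ↦ by
      rw [Real.sign_of_pos (by linarith [hx.out]), one_mul]
  have hleft : ∫ x in Iic (-b), sign (b + x) * ((x - m) * gaussianPDFReal m v x)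
      = -∫ x in Iic (-b), (x - m) * gaussianPDFReal m v x := by
    rw [← restrict_Iio_eq_restrict_Iic, ← integral_neg]
    exact setIntegral_congr_fun measurableSet_Iio fun x hx ↦ by
      rw [Real.sign_of_neg (by linarith [hx.out]), neg_one_mul]
  simp_rw [smul_eq_mul, mul_left_comm (gaussianPDFReal m v _), mul_comm (gaussianPDFReal m v _)]
  rw [← intervalIntegral.integral_Iic_add_Ioi hint.integrableOn hint.integrableOn, hleft, hright,
    integral_Iic_sub_mul_gaussianPDFReal m hv, integral_Ioi_sub_mul_gaussianPDFReal m hv]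
  ring

lemma covariance_sign_add_id_gaussianReal (b m : ℝ) (v : ℝ≥0) :
    cov[fun x ↦ sign (b + x), id; gaussianReal m v] = 2 * v * gaussianPDFReal m v (-b) := by
  have hid : Integrable (fun x : ℝ ↦ x) (gaussianReal m v) := IsGaussian.integrable_id
  have hsub : Integrable (fun x ↦ x - m) (gaussianReal m v) := hid.sub (integrable_const m)
  have hmean : ∫ x, (x - m) ∂gaussianReal m v = 0 := by
    rw [integral_sub hid (integrable_const m), integral_id_gaussianReal]
    simp
  have hsign : Measurable fun x : ℝ ↦ sign (b + x) :=
    Real.measurable_sign.comp (measurable_const.add measurable_id)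
  rw [← integral_sign_add_mul_sub_gaussianReal, covariance]
  simp only [id, integral_id_gaussianReal, sub_mul]
  rw [integral_sub (hsub.bdd_mul (c := 1) hsign.aestronglyMeasurable
      (ae_of_all _ fun x ↦ Real.abs_sign_le_one _)) (hsub.const_mul _),
    integral_const_mul, hmean, mul_zero, sub_zero]

section GaussianPair

variable {Ω : Type*} {mΩ : MeasurableSpace Ω} {P : Measure Ω} {X Y : Ω → ℝ}

/-- Regressing `Y` on `X`: the residual `Y - β X` is uncorrelated with `X`, hence independent of
it since `(X, Y)` is Gaussian, so only the component `β X` of `Y` correlates with `f X`. -/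
theorem HasGaussianLaw.covariance_comp_left (hXY : HasGaussianLaw (fun ω ↦ (X ω, Y ω)) P)
    (hX : Var[X; P] ≠ 0) {f : ℝ → ℝ} (hf : Measurable f) (hfX : MemLp (fun ω ↦ f (X ω)) 2 P) :
    cov[fun ω ↦ f (X ω), Y; P] = cov[X, Y; P] / Var[X; P] * cov[fun ω ↦ f (X ω), X; P] := by
  have := hXY.isProbabilityMeasure
  set β := cov[X, Y; P] / Var[X; P] with hβ
  have hX2 : MemLp X 2 P := hXY.fst.memLp_two
  have hY2 : MemLp Y 2 P := hXY.snd.memLp_two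
  let L : ℝ × ℝ →L[ℝ] ℝ × ℝ := (ContinuousLinearMap.fst ℝ ℝ ℝ).prod
    (ContinuousLinearMap.snd ℝ ℝ ℝ - β • ContinuousLinearMap.fst ℝ ℝ ℝ)
  have hW : HasGaussianLaw (fun ω ↦ (X ω, Y ω - β * X ω)) P := hXY.map_fun L
  have hcov : cov[X, fun ω ↦ Y ω - β * X ω; P] = 0 := by
    rw [covariance_fun_sub_right hX2 hY2 (hX2.const_mul β), covariance_const_mul_right,
      covariance_self hX2.aemeasurable, hβ, div_mul_cancel₀ _ hX, sub_self]
  have hindep : IndepFun (fun ω ↦ f (X ω)) (fun ω ↦ Y ω - β * X ω) P :=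
    (hW.indepFun_of_covariance_eq_zero hcov).comp hf measurable_id
  have := hindep.covariance_eq_zero hfX (hY2.sub (hX2.const_mul β))
  rw [covariance_fun_sub_right hfX hY2 (hX2.const_mul β), covariance_const_mul_right] at this
  linarith

theorem HasGaussianLaw.covariance_sign_add_left (hXY : HasGaussianLaw (fun ω ↦ (X ω, Y ω)) P)
    (hX : Var[X; P] ≠ 0) (b : ℝ) :
    cov[fun ω ↦ sign (b + X ω), Y; P]
      = 2 * cov[X, Y; P] * gaussianPDFReal P[X] Var[X; P].toNNReal (-b) := by
  have := hXY.isProbabilityMeasure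
  have hsign : Measurable fun t ↦ sign (b + t) :=
    Real.measurable_sign.comp (measurable_const.add measurable_id)
  have hXmeas : AEMeasurable X P := hXY.fst.aemeasurable
  have hcov : cov[fun ω ↦ sign (b + X ω), X; P] = cov[fun t ↦ sign (b + t), id; P.map X] :=
    (covariance_map hsign.aestronglyMeasurable aestronglyMeasurable_id hXmeas).symm
  rw [hXY.covariance_comp_left hX hsign (memLp_sign_comp (hXmeas.const_add b) 2), hcov,
    hXY.fst.map_eq_gaussianReal, covariance_sign_add_id_gaussianReal,
    Real.coe_toNNReal _ (variance_nonneg X P)]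
  field_simp

end GaussianPair

section GaussianVector

variable {ι : Type*} [Fintype ι] (m : ι → ℝ) (v : ι → ℝ≥0)

lemma hasGaussianLaw_id_pi_gaussianReal :
    HasGaussianLaw (fun x : ι → ℝ ↦ x) (Measure.pi fun i ↦ gaussianReal (m i) (v i)) :=
  iIndepFun.hasGaussianLaw (X := fun i (x : ι → ℝ) ↦ x i)
    (fun i ↦ ⟨by rw [(measurePreserving_eval _ i).map_eq]; infer_instance⟩)
    (iIndepFun_pi fun _ ↦ aemeasurable_id)

lemma memLp_eval_pi_gaussianReal (k : ι) :
    MemLp (fun x : ι → ℝ ↦ x k) 2 (Measure.pi fun i ↦ gaussianReal (m i) (v i)) :=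
  IsGaussian.memLp_two_id.comp_measurePreserving (measurePreserving_eval _ k)

lemma memLp_dotProduct_pi_gaussianReal (u : ι → ℝ) :
    MemLp (fun x ↦ u ⬝ᵥ x) 2 (Measure.pi fun i ↦ gaussianReal (m i) (v i)) :=
  memLp_finsetSum _ fun k _ ↦ (memLp_eval_pi_gaussianReal m v k).const_mul (u k)

lemma covariance_eval_pi_gaussianReal [DecidableEq ι] (k l : ι) :
    cov[fun x ↦ x k, fun x ↦ x l; Measure.pi fun i ↦ gaussianReal (m i) (v i)]
      = if k = l then (v k : ℝ) else 0 := by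
  split_ifs with hkl
  · subst hkl
    rw [covariance_self (measurable_pi_apply k).aemeasurable]
    change Var[id ∘ (fun x : ι → ℝ ↦ x k); _] = _
    rw [← variance_map aemeasurable_id (measurable_pi_apply k).aemeasurable,
      (measurePreserving_eval _ k).map_eq, variance_id_gaussianReal]
  · exact ((iIndepFun_pi fun _ ↦ aemeasurable_id).indepFun hkl).covariance_eq_zero
      (memLp_eval_pi_gaussianReal m v k) (memLp_eval_pi_gaussianReal m v l)

lemma covariance_dotProduct_pi_gaussianReal (u w : ι → ℝ) :
    cov[fun x ↦ u ⬝ᵥ x, fun x ↦ w ⬝ᵥ x; Measure.pi fun i ↦ gaussianReal (m i) (v i)]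
      = ∑ k, u k * v k * w k := by
  classical
  simp only [dotProduct]
  rw [covariance_fun_sum_fun_sum (fun k ↦ (memLp_eval_pi_gaussianReal m v k).const_mul (u k))
    (fun k ↦ (memLp_eval_pi_gaussianReal m v k).const_mul (w k))]
  simp only [covariance_const_mul_right, covariance_const_mul_left,
    covariance_eval_pi_gaussianReal, mul_ite, mul_zero, Finset.sum_ite_eq, Finset.mem_univ,
    if_true]
  exact Finset.sum_congr rfl fun _ _ ↦ by ring

lemma integral_dotProduct_pi_gaussianReal (u : ι → ℝ) :
    ∫ x, u ⬝ᵥ x ∂Measure.pi (fun i ↦ gaussianReal (m i) (v i)) = u ⬝ᵥ m := by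
  simp only [dotProduct]
  rw [integral_finsetSum _ fun k _ ↦
    ((memLp_eval_pi_gaussianReal m v k).integrable one_le_two).const_mul (u k)]
  simp [integral_const_mul, integral_eval, integral_id_gaussianReal]

lemma hasGaussianLaw_dotProduct_prod_pi_gaussianReal (u w : ι → ℝ) :
    HasGaussianLaw (fun x ↦ (u ⬝ᵥ x, w ⬝ᵥ x)) (Measure.pi fun i ↦ gaussianReal (m i) (v i)) := by
  let L : (ι → ℝ) →L[ℝ] ℝ × ℝ :=
    (∑ k, u k • ContinuousLinearMap.proj k).prod (∑ k, w k • ContinuousLinearMap.proj k)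
  refine ((hasGaussianLaw_id_pi_gaussianReal m v).map_fun L).congr (ae_of_all _ fun x ↦ ?_)
  simp [L, dotProduct]

end GaussianVector

lemma covariance_sign_add_dotProduct_pi_gaussianReal {ι : Type*} [Fintype ι] (b c : ℝ)
    {u : ι → ℝ} (hu : u ⬝ᵥ u ≠ 0) (w : ι → ℝ) :
    cov[fun x ↦ sign (b + u ⬝ᵥ x), fun x ↦ c + w ⬝ᵥ x; Measure.pi fun _ : ι ↦ gaussianReal 0 1]
      = 2 * (u ⬝ᵥ w) * (stdNormalPDF (b / √(u ⬝ᵥ u)) / √(u ⬝ᵥ u)) := by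
  have hcov (w' : ι → ℝ) :
      cov[fun x ↦ u ⬝ᵥ x, fun x ↦ w' ⬝ᵥ x; Measure.pi fun _ : ι ↦ gaussianReal 0 1]
        = u ⬝ᵥ w' := by
    rw [covariance_dotProduct_pi_gaussianReal]
    simp [dotProduct]
  have hvar : Var[fun x ↦ u ⬝ᵥ x; Measure.pi fun _ : ι ↦ gaussianReal 0 1] = u ⬝ᵥ u := by
    rw [← covariance_self (memLp_dotProduct_pi_gaussianReal _ _ u).aemeasurable, hcov]
  rw [covariance_const_add_right ((memLp_dotProduct_pi_gaussianReal _ _ w).integrable one_le_two),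
    (hasGaussianLaw_dotProduct_prod_pi_gaussianReal _ _ u w).covariance_sign_add_left
      (hvar ▸ hu) b, hcov, hvar, integral_dotProduct_pi_gaussianReal,
    show (u ⬝ᵥ fun _ ↦ (0 : ℝ)) = 0 from dotProduct_zero u, gaussianPDFReal_zero_eq_stdNormalPDF,
    Real.coe_toNNReal _ (hvar ▸ variance_nonneg _ _), neg_div, stdNormalPDF_neg]

end ProbabilityTheory

/-- Linear covariance formula (Stein's lemma for binary quantization).
A `D`-dimensional Gaussian vector `Z ~ N(μ, Σ)` is realized as `Z i = μ i + (A x) i`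
where `x` has `D` independent standard Gaussian coordinates and `Σ = A Aᵀ`.
With `S = ∑ᵢ sign(Zᵢ)`, `T = ∑ⱼ dⱼ Zⱼ`, `σᵢ = √Σᵢᵢ > 0` and
`aᵢ = 2φ(μᵢ/σᵢ)/σᵢ`, we have `Cov(S, T) = ∑ᵢⱼ aᵢ Σᵢⱼ dⱼ`. -/
theorem stmt_3 (D : ℕ) (μ d : Fin D → ℝ) (Sig A : Matrix (Fin D) (Fin D) ℝ)
    (hfact : ∀ i j, Sig i j = ∑ k, A i k * A j k)
    (hvar : ∀ i, 0 < Sig i i) :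
    let P := Measure.pi (fun _ : Fin D => gaussianReal 0 1)
    let Z : Fin D → (Fin D → ℝ) → ℝ := fun i x => μ i + ∑ k, A i k * x k
    let S : (Fin D → ℝ) → ℝ := fun x => ∑ i, Real.sign (Z i x)
    let T : (Fin D → ℝ) → ℝ := fun x => ∑ j, d j * Z j x
    let σ : Fin D → ℝ := fun i => Real.sqrt (Sig i i)
    let a : Fin D → ℝ := fun i => 2 * stdNormalPDF (μ i / σ i) / σ i
    (∫ x, S x * T x ∂P) - (∫ x, S x ∂P) * (∫ x, T x ∂P) =
      ∑ i, ∑ j, a i * Sig i j * d j := by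
  intro P Z S T σ a
  have hdot (i j : Fin D) : A i ⬝ᵥ A j = Sig i j := (hfact i j).symm
  have hZ (j : Fin D) : MemLp (Z j) 2 P :=
    (memLp_const (μ j)).add (memLp_dotProduct_pi_gaussianReal 0 1 (A j))
  have hsign (i : Fin D) : MemLp (fun x ↦ sign (Z i x)) 2 P :=
    memLp_sign_comp (hZ i).aemeasurable 2
  have hterm (i j : Fin D) : cov[fun x ↦ sign (Z i x), Z j; P] = a i * Sig i j := by
    have := covariance_sign_add_dotProduct_pi_gaussianReal (μ i) (μ j)
      ((hdot i i).symm ▸ (hvar i).ne') (A j)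
    rw [hdot, hdot] at this
    exact this.trans (by ring)
  calc (∫ x, S x * T x ∂P) - (∫ x, S x ∂P) * (∫ x, T x ∂P) = cov[S, T; P] :=
        (covariance_eq_sub (memLp_finsetSum _ fun i _ ↦ hsign i)
          (memLp_finsetSum _ fun j _ ↦ (hZ j).const_mul (d j))).symm
    _ = ∑ i, ∑ j, d j * cov[fun x ↦ sign (Z i x), Z j; P] := by
        rw [covariance_fun_sum_fun_sum hsign fun j ↦ (hZ j).const_mul (d j)]
        simp only [covariance_const_mul_right]
    _ = ∑ i, ∑ j, a i * Sig i j * d j := by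
        simp only [hterm, mul_comm (d _)]
end

section
/- Let σ > 0, let a(σ) = σ√(2/π), b(σ) = 2σφ(α/σ), and p(σ) = erfc(α/(σ√2)) for a fixed threshold α > 0, where φ is the standard normal density. Then (a(σ) + b(σ))²/(1 + 3p(σ)) > a(σ)², i.e. the 2-bit per-coordinate information ratio strictly exceeds the 1-bit ratio. -/
open MeasureTheory Real

/-- Complementary error function `erfc(u) = (2/√π) ∫_u^∞ e^{-s²} ds`. -/
noncomputable def erfc (u : ℝ) : ℝ :=
  (2 / Real.sqrt Real.pi) * ∫ s in Set.Ioi u, Real.exp (-s ^ 2)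

open Set Filter Topology

/-! With `u = α / (σ√2)` and `E = e^{-u²}` one has `b = a E`, so the claim reduces to
`3 erfc u < 2E + E²` for `u > 0`. For `u ≤ 3/4` this follows from `e^{-x} ≥ 1 - x`, applied to
`E` and integrated once for `∫₀ᵘ e^{-s²} ≥ u - u³/3`; for `u ≥ 3/4` from the Mills-ratio bound
`erfc u ≤ E / (u√π)`, obtained by comparing `e^{-s²}` with `(s/u) e^{-s²}` on `(u, ∞)`. -/

lemma integrable_exp_neg_sq : Integrable (fun s : ℝ => exp (-s ^ 2)) := by
  simpa using integrable_exp_neg_mul_sq one_pos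

lemma integrable_mul_exp_neg_sq : Integrable (fun s : ℝ => s * exp (-s ^ 2)) := by
  simpa using integrable_mul_exp_neg_mul_sq one_pos

lemma erfc_nonneg (u : ℝ) : 0 ≤ erfc u :=
  mul_nonneg (by positivity) (setIntegral_nonneg measurableSet_Ioi fun _ _ => (exp_pos _).le)

lemma erfc_eq_one_sub (u : ℝ) : erfc u = 1 - 2 / √π * ∫ s in (0 : ℝ)..u, exp (-s ^ 2) := by
  have hsplit := intervalIntegral.integral_interval_add_Ioi
    integrable_exp_neg_sq.integrableOn (a := 0) integrable_exp_neg_sq.integrableOn (b := u)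
  have hhalf : ∫ s in Ioi (0 : ℝ), exp (-s ^ 2) = √π / 2 := by
    simpa using integral_gaussian_Ioi 1
  have hπ : 0 < √π := sqrt_pos.mpr pi_pos
  have htail : ∫ s in Ioi u, exp (-s ^ 2) = √π / 2 - ∫ s in (0 : ℝ)..u, exp (-s ^ 2) := by
    linarith
  rw [erfc, htail]
  field_simp

lemma sub_pow_three_div_three_le_integral_exp_neg_sq {u : ℝ} (hu : 0 ≤ u) :
    u - u ^ 3 / 3 ≤ ∫ s in (0 : ℝ)..u, exp (-s ^ 2) := by
  have hpoly : ∫ s in (0 : ℝ)..u, (1 - s ^ 2) = u - u ^ 3 / 3 := by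
    norm_num [integral_pow]
  rw [← hpoly]
  have hcont : Continuous fun s : ℝ => 1 - s ^ 2 := by fun_prop
  refine intervalIntegral.integral_mono_on hu (hcont.intervalIntegrable _ _)
    integrable_exp_neg_sq.intervalIntegrable fun s _ => ?_
  linarith [add_one_le_exp (-s ^ 2)]

lemma integral_Ioi_mul_exp_neg_sq (u : ℝ) :
    ∫ s in Ioi u, s * exp (-s ^ 2) = exp (-u ^ 2) / 2 := by
  have hderiv : ∀ s ∈ Ici u,
      HasDerivAt (fun s : ℝ => -exp (-s ^ 2) / 2) (s * exp (-s ^ 2)) s := fun s _ => by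
    refine ((hasDerivAt_pow 2 s).neg.exp.neg.div_const 2).congr_deriv ?_
    simp only [Pi.neg_apply]
    push_cast
    ring
  have hlim : Tendsto (fun s : ℝ => -exp (-s ^ 2) / 2) atTop (𝓝 0) := by
    simpa using
      ((tendsto_exp_neg_atTop_nhds_zero.comp (tendsto_pow_atTop two_ne_zero)).neg.div_const 2)
  rw [integral_Ioi_of_hasDerivAt_of_tendsto' hderiv integrable_mul_exp_neg_sq.integrableOn hlim]
  ring

lemma erfc_le_exp_neg_sq_div {u : ℝ} (hu : 0 < u) : erfc u ≤ exp (-u ^ 2) / (u * √π) := by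
  have hmono : ∫ s in Ioi u, exp (-s ^ 2) ≤ ∫ s in Ioi u, u⁻¹ * (s * exp (-s ^ 2)) := by
    refine setIntegral_mono_on integrable_exp_neg_sq.integrableOn
      (integrable_mul_exp_neg_sq.integrableOn.const_mul _) measurableSet_Ioi fun s hs => ?_
    rw [← mul_assoc]
    refine le_mul_of_one_le_left (exp_pos _).le ?_
    rw [inv_mul_eq_div, one_le_div hu]
    exact le_of_lt hs
  rw [integral_const_mul, integral_Ioi_mul_exp_neg_sq] at hmono
  calc erfc u ≤ 2 / √π * (u⁻¹ * (exp (-u ^ 2) / 2)) :=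
        mul_le_mul_of_nonneg_left hmono (by positivity)
    _ = exp (-u ^ 2) / (u * √π) := by field_simp

lemma sqrt_pi_gt : 1.7 < √π := lt_sqrt_of_sq_lt (by nlinarith [pi_gt_three])

lemma sqrt_pi_lt : √π < 1.8 := (sqrt_lt' (by norm_num)).mpr (by nlinarith [pi_lt_d2])

lemma three_mul_erfc_lt_of_le {u : ℝ} (hu : 0 < u) (hu' : u ≤ 3 / 4) :
    3 * erfc u < 2 * exp (-u ^ 2) + exp (-u ^ 2) ^ 2 := by
  have hE : 1 - u ^ 2 ≤ exp (-u ^ 2) := by linarith [add_one_le_exp (-u ^ 2)]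
  have hE_sq : (1 - u ^ 2) ^ 2 ≤ exp (-u ^ 2) ^ 2 := pow_le_pow_left₀ (by nlinarith) hE 2
  have hc : 10 / 3 < 2 / √π * 3 := by
    rw [div_mul_eq_mul_div, lt_div_iff₀ (sqrt_pos.mpr pi_pos)]
    linarith [sqrt_pi_lt]
  have hJ : 10 / 3 * (u - u ^ 3 / 3) ≤ 2 / √π * 3 * ∫ s in (0 : ℝ)..u, exp (-s ^ 2) :=
    mul_le_mul hc.le (sub_pow_three_div_three_le_integral_exp_neg_sq hu.le) (by nlinarith)
      (by positivity)
  have hpoly : 0 < 10 / 3 - 4 * u - 10 / 9 * u ^ 2 + u ^ 3 := by nlinarith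
  rw [erfc_eq_one_sub]
  nlinarith [mul_pos hu hpoly]

lemma three_mul_erfc_lt_of_ge {u : ℝ} (hu : 3 / 4 ≤ u) :
    3 * erfc u < 2 * exp (-u ^ 2) + exp (-u ^ 2) ^ 2 := by
  have hu₀ : 0 < u := by linarith
  have hE : 1 - u ^ 2 ≤ exp (-u ^ 2) := by linarith [add_one_le_exp (-u ^ 2)]
  have hE₀ := exp_pos (-u ^ 2)
  have h3 : 3 < 1.7 * u * (2 + exp (-u ^ 2)) := by
    rcases le_or_gt u 1 with hu1 | hu1
    · nlinarith [mul_nonneg (sub_nonneg.2 hu) (sub_nonneg.2 hu1)]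
    · nlinarith
  calc 3 * erfc u ≤ 3 * (exp (-u ^ 2) / (u * √π)) := by
        gcongr; exact erfc_le_exp_neg_sq_div hu₀
    _ < 2 * exp (-u ^ 2) + exp (-u ^ 2) ^ 2 := by
        rw [mul_div_assoc', div_lt_iff₀ (by positivity)]
        nlinarith [mul_lt_mul_of_pos_right sqrt_pi_gt (by positivity : 0 < u * (2 + exp (-u ^ 2)))]

lemma three_mul_erfc_lt {u : ℝ} (hu : 0 < u) :
    3 * erfc u < 2 * exp (-u ^ 2) + exp (-u ^ 2) ^ 2 := by
  rcases le_total u (3 / 4) with hu' | hu'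
  exacts [three_mul_erfc_lt_of_le hu hu', three_mul_erfc_lt_of_ge hu']

lemma two_mul_stdNormalPDF (t : ℝ) : 2 * stdNormalPDF t = √(2 / π) * exp (-(t / √2) ^ 2) := by
  have h2 : √2 ^ 2 = 2 := sq_sqrt zero_le_two
  have hπ : 0 < √π := sqrt_pos.mpr pi_pos
  rw [stdNormalPDF, sqrt_mul zero_le_two, sqrt_div zero_le_two, div_pow, h2, neg_div]
  field_simp
  rw [h2]

/-- The 2-bit per-coordinate information ratio strictly exceeds the 1-bit ratio:
with `a = σ√(2/π)`, `b = 2σφ(α/σ)`, `p = erfc(α/(σ√2))` for `σ, α > 0`,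
`(a + b)²/(1 + 3p) > a²`. -/
theorem stmt_19 (σ α : ℝ) (hσ : 0 < σ) (hα : 0 < α) :
    let a := σ * Real.sqrt (2 / Real.pi)
    let b := 2 * σ * stdNormalPDF (α / σ)
    let p := erfc (α / (σ * Real.sqrt 2))
    a ^ 2 < (a + b) ^ 2 / (1 + 3 * p) := by
  intro a b p
  set E := exp (-(α / (σ * √2)) ^ 2)
  have ha : 0 < a := by positivity
  have hb : b = a * E := by
    simp only [b, a, E]
    rw [mul_comm 2 σ, mul_assoc, two_mul_stdNormalPDF, div_div, mul_assoc]
  have hp : 3 * p < 2 * E + E ^ 2 := three_mul_erfc_lt (by positivity)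
  rw [hb, lt_div_iff₀ (by linarith [erfc_nonneg (α / (σ * √2))])]
  nlinarith [mul_lt_mul_of_pos_left hp (pow_pos ha 2)]
end
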